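/- arXiv:1409.4154 — 5 statements merged into one kernel-verified Lean document; each statement's English description precedes it below -/
import Mathlib

section
/- Let p be a prime and k a commutative ring. There exists a map N : 𝕎 k → 𝕎 k such that: (1) N(a·b) = N(a)·N(b) for all a, b and N(1) = 1; (2) frobenius(N(a)) = a^p for all a; and (3) N satisfies the norm ghost formula, i.e. the 0-th ghost component of N(a) equals the 0-th ghost component of a, and for every n the (n+1)-st ghost component of N(a) equals the p-th power of the n-th ghost component of a. -/
/-!
Write `x = [x₀] + V b`. Since `V b * V b = V (b * b) * p` and the inner binomial coefficients of
`([x₀] + V b) ^ p` are divisible by `p`, we get `x ^ p - [x₀] ^ p = p * z`, and `y = [x₀] + V z`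
satisfies `y₀ = x₀` and, on ghost components, `F y = x ^ p`. Doing this once for the generic Witt
vector over `ℤ[X₀, X₁, …]`, whose ghost map is injective, yields a polynomial operation `N` with
`F (N x) = x ^ p` and `(N x)₀ = x₀`. These two facts are exactly the ghost formula for `N`, and
since `N` is polynomial the ghost formula forces `N (x * y) = N x * N y` and `N 1 = 1`.
-/

open MvPolynomial

namespace WittVector

variable {p : ℕ} [hp : Fact p.Prime] {R S : Type*} [CommRing R] [CommRing S]

theorem verschiebung_mul_verschiebung (x y : WittVector p R) :
    verschiebung x * verschiebung y = verschiebung (x * y) * p := by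
  rw [← verschiebung_mul_frobenius, frobenius_verschiebung, ← mul_assoc,
    ← verschiebung_mul_frobenius, map_natCast]

theorem teichmuller_add_verschiebung_shift (x : WittVector p R) :
    teichmuller p (x.coeff 0) + verschiebung (x.shift 1) = x := by
  have disjoint (n : ℕ) :
      (teichmuller p (x.coeff 0)).coeff n = 0 ∨ (verschiebung (x.shift 1)).coeff n = 0 := by
    cases n with
    | zero => exact .inr (verschiebung_coeff_zero _)
    | succ n => exact .inl (teichmuller_coeff_pos p _ _ n.succ_pos)
  ext n
  rw [coeff_add_of_disjoint n _ _ disjoint]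
  cases n with
  | zero => rw [teichmuller_coeff_zero, verschiebung_coeff_zero, add_zero]
  | succ n =>
    rw [teichmuller_coeff_pos p _ _ n.succ_pos, verschiebung_coeff_succ, shift_coeff, zero_add,
      add_comm]

theorem natCast_dvd_pow_sub_teichmuller_pow (x : WittVector p R) :
    (p : WittVector p R) ∣ x ^ p - teichmuller p (x.coeff 0) ^ p := by
  set t := teichmuller p (x.coeff 0)
  set v := verschiebung (x.shift 1)
  obtain ⟨r, hr⟩ := exists_add_pow_prime_eq hp.out t v
  have hv : (p : WittVector p R) ∣ v ^ p :=
    calc (p : WittVector p R) ∣ v ^ 2 := ⟨_, by rw [sq, verschiebung_mul_verschiebung, mul_comm]⟩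
      _ ∣ v ^ p := pow_dvd_pow v hp.out.two_le
  have hx : x ^ p - t ^ p = v ^ p + p * (t * v * r) := by
    rw [← teichmuller_add_verschiebung_shift x, hr]
    ring
  rw [hx]
  exact dvd_add hv (dvd_mul_right _ _)

theorem ext_ghostComponent_mvPolynomial {x y : WittVector p (MvPolynomial ℕ ℤ)}
    (h : ∀ n, ghostComponent n x = ghostComponent n y) : x = y := by
  ext n
  simp only [ghostComponent_apply] at h
  rw [poly_eq_of_wittPolynomial_bind_eq p x.coeff y.coeff h]

theorem exists_frobenius_eq_pow_mvPolynomial (x : WittVector p (MvPolynomial ℕ ℤ)) :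
    ∃ y, frobenius y = x ^ p ∧ y.coeff 0 = x.coeff 0 := by
  obtain ⟨z, hz⟩ := natCast_dvd_pow_sub_teichmuller_pow x
  refine ⟨teichmuller p (x.coeff 0) + verschiebung z,
    ext_ghostComponent_mvPolynomial fun n => ?_, ?_⟩
  · rw [eq_add_of_sub_eq' hz]
    simp only [ghostComponent_frobenius, map_add, map_mul, map_pow, ghostComponent_teichmuller,
      ghostComponent_verschiebung, map_natCast, pow_succ, pow_mul]
  · rw [add_coeff_zero, teichmuller_coeff_zero, verschiebung_coeff_zero, add_zero]

theorem map_frobenius (f : R →+* S) (x : WittVector p R) :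
    map f (frobenius x) = frobenius (map f x) := by
  ext n
  rw [map_coeff, coeff_frobenius, coeff_frobenius, map_aeval, aeval_eq_eval₂Hom]
  exact eval₂Hom_congr (RingHom.ext_int _ _) (funext fun i => (map_coeff f x i).symm) rfl

theorem map_aeval_coeff_mk_X (x : WittVector p R) :
    map (aeval (R := ℤ) x.coeff).toRingHom (mk p X) = x := by
  ext n
  rw [map_coeff, coeff_mk, AlgHom.toRingHom_eq_coe, RingHom.coe_coe, aeval_X]

variable (p) in
noncomputable def universalNorm : WittVector p (MvPolynomial ℕ ℤ) :=
  (exists_frobenius_eq_pow_mvPolynomial (mk p X)).choose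

theorem frobenius_universalNorm : frobenius (universalNorm p) = mk p X ^ p :=
  (exists_frobenius_eq_pow_mvPolynomial (mk p X)).choose_spec.1

theorem coeff_zero_universalNorm : (universalNorm p).coeff 0 = X 0 :=
  (exists_frobenius_eq_pow_mvPolynomial (mk p X)).choose_spec.2

noncomputable def norm (x : WittVector p R) : WittVector p R :=
  map (aeval (R := ℤ) x.coeff).toRingHom (universalNorm p)

instance normIsPoly : IsPoly p fun _ _ => norm :=
  ⟨⟨(universalNorm p).coeff, fun _ _ _ => funext fun n => map_coeff _ _ n⟩⟩

theorem frobenius_norm (x : WittVector p R) : frobenius (norm x) = x ^ p := by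
  rw [norm, ← map_frobenius, frobenius_universalNorm, map_pow, map_aeval_coeff_mk_X]

theorem coeff_zero_norm (x : WittVector p R) : (norm x).coeff 0 = x.coeff 0 := by
  rw [norm, map_coeff, coeff_zero_universalNorm]
  exact aeval_X _ _

theorem ghostComponent_zero_norm (x : WittVector p R) :
    ghostComponent 0 (norm x) = ghostComponent 0 x := by
  simp only [ghostComponent_apply, wittPolynomial_zero, aeval_X, coeff_zero_norm]

theorem ghostComponent_succ_norm (x : WittVector p R) (n : ℕ) :
    ghostComponent (n + 1) (norm x) = ghostComponent n x ^ p := by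
  rw [← ghostComponent_frobenius, frobenius_norm, map_pow]

theorem norm_mul (x y : WittVector p R) : norm (x * y) = norm x * norm y := by
  have : IsPoly₂ p fun _ _ x y => norm (x * y) :=
    IsPoly.comp₂ (hg := normIsPoly) (hf := mulIsPoly₂)
  have : IsPoly₂ p fun _ _ x y => norm x * norm y :=
    IsPoly₂.comp (hh := mulIsPoly₂) (hf := normIsPoly) (hg := normIsPoly)
  ghost_calc x y
  rintro (_ | n) <;>
    simp only [map_mul, ghostComponent_zero_norm, ghostComponent_succ_norm, mul_pow]

theorem norm_one : norm (1 : WittVector p R) = 1 := by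
  have hnorm : IsPoly p fun _ _ _ => norm 1 := IsPoly.comp (hg := normIsPoly) (hf := oneIsPoly)
  refine IsPoly.ext hnorm oneIsPoly (fun _ _ _ n => ?_) R 0
  cases n <;> simp only [map_one, ghostComponent_zero_norm, ghostComponent_succ_norm, one_pow]

end WittVector

/-- There exists a norm map `N : 𝕎 k → 𝕎 k` on `p`-typical Witt vectors which is
multiplicative, satisfies `frobenius (N a) = a ^ p`, and is given on ghost components by
`w₀(N a) = w₀(a)` and `w_{n+1}(N a) = w_n(a) ^ p`. -/
theorem witt_norm_exists (p : ℕ) [hp : Fact p.Prime] (k : Type*) [CommRing k] :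
    ∃ N : WittVector p k → WittVector p k,
      (∀ a b : WittVector p k, N (a * b) = N a * N b) ∧
      N 1 = 1 ∧
      (∀ a : WittVector p k, WittVector.frobenius (N a) = a ^ p) ∧
      (∀ a : WittVector p k,
        WittVector.ghostComponent 0 (N a) = WittVector.ghostComponent 0 a) ∧
      (∀ (a : WittVector p k) (n : ℕ),
        WittVector.ghostComponent (n + 1) (N a) = WittVector.ghostComponent n a ^ p) :=
  ⟨WittVector.norm, WittVector.norm_mul, WittVector.norm_one, WittVector.frobenius_norm,
    WittVector.ghostComponent_zero_norm, WittVector.ghostComponent_succ_norm⟩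
end

section
/- Let p be a prime and k a commutative ring in which p is a nonzerodivisor. Let N : 𝕎 k → 𝕎 k satisfy the norm ghost formula (the 0-th ghost component of N(a) equals the 0-th ghost component of a, and for every n the (n+1)-st ghost component of N(a) equals the p-th power of the n-th ghost component of a). Then for all a, b ∈ 𝕎 k: N(a + b) = N(a) + N(b) + Σ_{i=1}^{p-1} (C(p,i)/p) · V(a^i · b^{p-i}), where C(p,i)/p ∈ ℕ is the integer (1/p)·(p choose i) and V is the Verschiebung. -/
/-!
When `p` is a nonzerodivisor the ghost map is injective: the `n`-th ghost component is
`p ^ n * x n` plus a polynomial in the earlier coordinates. So it suffices to compare ghost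
components. Since `V` shifts ghost components and multiplies them by `p`, the `(n + 1)`-st ghost
component of the correction term is `∑ C(p,i) A^i B^(p-i)` with `A`, `B` the `n`-th ghost
components of `a`, `b`, and the identity becomes the binomial expansion of `(A + B) ^ p`.
-/

open Finset

theorem add_pow_eq_add_add_sum_Ico {R : Type*} [CommSemiring R] (x y : R) {n : ℕ} (hn : 0 < n) :
    (x + y) ^ n = x ^ n + y ^ n + ∑ i ∈ Ico 1 n, n.choose i * (x ^ i * y ^ (n - i)) := by
  rw [add_pow, sum_range_succ, range_eq_Ico, sum_eq_sum_Ico_succ_bot hn]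
  simp only [Nat.sub_self, Nat.sub_zero, Nat.choose_self, Nat.choose_zero_right, pow_zero,
    Nat.cast_one, mul_one, one_mul, zero_add]
  rw [sum_congr rfl fun i _ => mul_comm (x ^ i * y ^ (n - i)) (n.choose i : R)]
  ring

namespace WittVector

variable {p : ℕ} [hp : Fact p.Prime] {R : Type*} [CommRing R]

theorem ghostMap_injective (hreg : IsSMulRegular R (p : R)) :
    Function.Injective (ghostMap : WittVector p R →+* ℕ → R) := by
  refine (injective_iff_map_eq_zero _).mpr fun x hx => ?_
  ext n
  induction n using Nat.strong_induction_on with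
  | _ n ih =>
    have hn := congrFun hx n
    rw [ghostMap_apply, ghostComponent_apply, aeval_wittPolynomial, sum_range_succ,
      sum_eq_zero fun i hi => by
        rw [ih i (mem_range.mp hi), zero_coeff, zero_pow (pow_ne_zero _ hp.out.ne_zero), mul_zero],
      zero_add, Nat.sub_self, pow_zero, pow_one] at hn
    rw [zero_coeff]
    exact (hreg.pow n).right_eq_zero_of_smul hn

theorem ghostComponent_zero_nsmul_verschiebung (c : ℕ) (x : WittVector p R) :
    ghostComponent 0 (c • verschiebung x) = 0 := by
  rw [map_nsmul, ghostComponent_zero_verschiebung, smul_zero]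

theorem ghostComponent_succ_nsmul_verschiebung (c n : ℕ) (x : WittVector p R) :
    ghostComponent (n + 1) (c • verschiebung x) = ((c * p : ℕ) : R) * ghostComponent n x := by
  rw [map_nsmul, ghostComponent_verschiebung, nsmul_eq_mul, Nat.cast_mul, mul_assoc]

theorem ghostComponent_succ_sum_choose_div_nsmul_verschiebung (a b : WittVector p R) (n : ℕ) :
    ghostComponent (n + 1)
        (∑ i ∈ Ico 1 p, (p.choose i / p) • verschiebung (a ^ i * b ^ (p - i))) =
      ∑ i ∈ Ico 1 p, p.choose i * (ghostComponent n a ^ i * ghostComponent n b ^ (p - i)) := by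
  rw [map_sum]
  refine sum_congr rfl fun i hi => ?_
  obtain ⟨hi₁, hip⟩ := mem_Ico.mp hi
  have hdvd : p ∣ p.choose i := hp.out.dvd_choose_self (by omega) hip
  rw [ghostComponent_succ_nsmul_verschiebung, Nat.div_mul_cancel hdvd, map_mul, map_pow, map_pow]

end WittVector

open WittVector

/-- Additivity defect of the norm: if `p` is a nonzerodivisor in `k` and
`N : 𝕎 k → 𝕎 k` satisfies the norm ghost formula, then
`N (a + b) = N a + N b + ∑_{i=1}^{p-1} (C(p,i)/p) • V (a^i * b^(p-i))`. -/
theorem witt_norm_add (p : ℕ) [hp : Fact p.Prime] (k : Type*) [CommRing k]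
    (hreg : ∀ x : k, (p : k) * x = 0 → x = 0)
    (N : WittVector p k → WittVector p k)
    (hN0 : ∀ a : WittVector p k,
      WittVector.ghostComponent 0 (N a) = WittVector.ghostComponent 0 a)
    (hNS : ∀ (a : WittVector p k) (n : ℕ),
      WittVector.ghostComponent (n + 1) (N a) = WittVector.ghostComponent n a ^ p)
    (a b : WittVector p k) :
    N (a + b) = N a + N b +
      ∑ i ∈ Finset.Ico 1 p,
        (p.choose i / p) • WittVector.verschiebung (a ^ i * b ^ (p - i)) := by
  refine ghostMap_injective (.of_right_eq_zero_of_smul hreg) (funext fun n => ?_)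
  rcases n with _ | n
  · simp only [ghostMap_apply, map_add, map_sum, hN0, ghostComponent_zero_nsmul_verschiebung,
      sum_const_zero, add_zero]
  · rw [ghostMap_apply, ghostMap_apply, map_add, map_add, hNS, hNS, hNS, map_add,
      add_pow_eq_add_add_sum_Ico _ _ hp.out.pos, ghostComponent_succ_sum_choose_div_nsmul_verschiebung]
end

section
/- Let k be a commutative ring in which 2 is a nonzerodivisor, and let N : 𝕎 k → 𝕎 k (2-typical Witt vectors) satisfy the norm ghost formula (the 0-th ghost component of N(a) equals the 0-th ghost component of a, and for every n the (n+1)-st ghost component of N(a) equals the square of the n-th ghost component of a). Then for all a ∈ 𝕎 k: N(a) + N(−a) = V(a²), where V is the Verschiebung. -/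
/-!
Witt vectors over a ring in which `p` is a nonzerodivisor are determined by their ghost
components, since the `n`-th ghost component is `p ^ n * xₙ` plus a polynomial in the earlier
coefficients. It therefore suffices to compare ghost components: the `0`-th ones of both sides
vanish, and in degree `n + 1` the norm ghost formula gives `wₙ(a) ^ 2 + (-wₙ(a)) ^ 2 = 2 wₙ(a ^ 2)`,
which is the `(n + 1)`-st ghost component of `V (a ^ 2)`.
-/

open Finset

namespace WittVector

variable {p : ℕ} [Fact p.Prime] {R : Type*} [CommRing R]

theorem ghostComponent_eq_sum_add_pow_mul_coeff (x : WittVector p R) (n : ℕ) :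
    ghostComponent n x =
      ∑ i ∈ range n, (p : R) ^ i * x.coeff i ^ p ^ (n - i) + (p : R) ^ n * x.coeff n := by
  rw [ghostComponent_apply, aeval_wittPolynomial, sum_range_succ, Nat.sub_self, pow_zero,
    pow_one]

theorem ext_ghostComponent (hp : IsLeftRegular (p : R)) {x y : WittVector p R}
    (h : ∀ n, ghostComponent n x = ghostComponent n y) : x = y := by
  ext n
  induction n using Nat.strong_induction_on with
  | _ n ih =>
    have hsum : ∑ i ∈ range n, (p : R) ^ i * x.coeff i ^ p ^ (n - i) =
        ∑ i ∈ range n, (p : R) ^ i * y.coeff i ^ p ^ (n - i) :=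
      sum_congr rfl fun i hi => by rw [ih i (mem_range.mp hi)]
    have hn := h n
    rw [ghostComponent_eq_sum_add_pow_mul_coeff, ghostComponent_eq_sum_add_pow_mul_coeff, hsum]
      at hn
    exact (hp.pow n) (add_left_cancel hn)

end WittVector

open WittVector in
/-- For `2`-typical Witt vectors over a ring in which `2` is a nonzerodivisor, any map
`N` satisfying the norm ghost formula satisfies `N a + N (-a) = V (a ^ 2)`. -/
theorem witt_norm_two (k : Type*) [CommRing k]
    (hreg : ∀ x : k, (2 : k) * x = 0 → x = 0)
    (N : WittVector 2 k → WittVector 2 k)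
    (hN0 : ∀ a : WittVector 2 k,
      WittVector.ghostComponent 0 (N a) = WittVector.ghostComponent 0 a)
    (hNS : ∀ (a : WittVector 2 k) (n : ℕ),
      WittVector.ghostComponent (n + 1) (N a) = WittVector.ghostComponent n a ^ 2)
    (a : WittVector 2 k) :
    N a + N (-a) = WittVector.verschiebung (a ^ 2) := by
  have h2 : IsLeftRegular ((2 : ℕ) : k) := by
    exact_mod_cast isLeftRegular_iff_right_eq_zero_of_mul.mpr hreg
  refine ext_ghostComponent h2 fun n => ?_
  cases n with
  | zero => simp [hN0, ghostComponent_zero_verschiebung]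
  | succ n =>
    rw [map_add, hNS, hNS, ghostComponent_verschiebung, map_pow, map_neg]
    push_cast
    ring
end

section
/- Let p be a prime and k an integral domain containing a primitive p-th root of unity ξ. Let N : 𝕎 k → 𝕎 k satisfy the norm ghost formula (the 0-th ghost component of N(a) equals the 0-th ghost component of a, and for every n the (n+1)-st ghost component of N(a) equals the p-th power of the n-th ghost component of a). Then for every a ∈ 𝕎 k: Σ_{i=0}^{p-1} N(τ(ξ)^i · a) = V(a^p), where τ(ξ) is the Teichmüller lift of ξ and V is the Verschiebung. -/
/-!
Since `ξ` exists, `p ≠ 0` in `k`, and over such a domain a Witt vector is determined by its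
ghost components `wₙ`. The summands have `w₀ = ξ^i w₀(a)`, which sum to `0 = w₀(V(a^p))`, and
`w_{n+1} = (ξ^(i p^n) wₙ(a))^p = wₙ(a)^p`, which sum to `p wₙ(a)^p = w_{n+1}(V(a^p))`.
-/

namespace WittVector

variable {p : ℕ} [Fact p.Prime] {R S : Type*} [CommRing R] [CommRing S]

theorem ghostComponent_map (f : R →+* S) (n : ℕ) (x : WittVector p R) :
    ghostComponent n (map f x) = f (ghostComponent n x) := by
  simp only [ghostComponent_apply, MvPolynomial.aeval_def, MvPolynomial.eval₂_comp_left f]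
  congr 1
  exact RingHom.ext_int _ _

/-- Over `R[1/p]` the ghost map is an isomorphism, and `𝕎 R` embeds into `𝕎 R[1/p]`. -/
theorem ghostMap_injective_of_mem_nonZeroDivisors (hp : (p : R) ∈ nonZeroDivisors R) :
    Function.Injective (ghostMap : WittVector p R → ℕ → R) := by
  let L := Localization.Away (p : R)
  have hinj : Function.Injective (algebraMap R L) :=
    IsLocalization.injective L (Submonoid.powers_le.mpr hp)
  have : Invertible (p : L) := by
    rw [← map_natCast (algebraMap R L)]
    exact (IsLocalization.Away.algebraMap_isUnit (p : R)).invertible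
  intro x y hxy
  refine map_injective _ hinj ((ghostMap.bijective_of_invertible p L).injective ?_)
  funext n
  simpa only [ghostMap_apply, ghostComponent_map] using
    congrArg (algebraMap R L) (congrFun hxy n)

theorem ghostComponent_teichmuller_pow_mul (r : R) (i n : ℕ) (x : WittVector p R) :
    ghostComponent n (teichmuller p r ^ i * x) = r ^ (i * p ^ n) * ghostComponent n x := by
  rw [map_mul, map_pow, ghostComponent_teichmuller, ← pow_mul, mul_comm (p ^ n)]

end WittVector

/-- If `k` is an integral domain containing a primitive `p`-th root of unity `ξ` and
`N : 𝕎 k → 𝕎 k` satisfies the norm ghost formula, then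
`∑_{i=0}^{p-1} N (τ(ξ)^i * a) = V (a ^ p)`. -/
theorem witt_norm_root_of_unity_sum (p : ℕ) [hp : Fact p.Prime]
    (k : Type*) [CommRing k] [IsDomain k] (ξ : k) (hξ : IsPrimitiveRoot ξ p)
    (N : WittVector p k → WittVector p k)
    (hN0 : ∀ a : WittVector p k,
      WittVector.ghostComponent 0 (N a) = WittVector.ghostComponent 0 a)
    (hNS : ∀ (a : WittVector p k) (n : ℕ),
      WittVector.ghostComponent (n + 1) (N a) = WittVector.ghostComponent n a ^ p)
    (a : WittVector p k) :
    ∑ i ∈ Finset.range p, N (WittVector.teichmuller p ξ ^ i * a) =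
      WittVector.verschiebung (a ^ p) := by
  -- in characteristic `p` there are no nontrivial `p`-th roots of unity
  have : NeZero (p : k) := hξ.neZero'
  apply WittVector.ghostMap_injective_of_mem_nonZeroDivisors
    (mem_nonZeroDivisors_of_ne_zero (NeZero.ne _))
  funext n
  simp only [WittVector.ghostMap_apply, map_sum]
  cases n with
  | zero =>
    simp only [hN0, WittVector.ghostComponent_teichmuller_pow_mul, pow_zero, mul_one,
      WittVector.ghostComponent_zero_verschiebung, ← Finset.sum_mul,
      hξ.geom_sum_eq_zero hp.out.one_lt, zero_mul]
  | succ n =>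
    have hξ_pow (i : ℕ) : (ξ ^ (i * p ^ n)) ^ p = 1 := by
      rw [← pow_mul, mul_comm, pow_mul, hξ.pow_eq_one, one_pow]
    simp only [hNS, WittVector.ghostComponent_teichmuller_pow_mul, mul_pow, hξ_pow, one_mul,
      Finset.sum_const, Finset.card_range, nsmul_eq_mul, WittVector.ghostComponent_verschiebung,
      map_pow]
end

section
/- Let k be a commutative ring and d₁, d₂ positive integers. For every sequence x : ℕ+ → k, N̂_{d₁}(N̂_{d₂}(x)) = N̂_{d₁·d₂}(x); that is, for every t ∈ ℕ+, N̂_{d₁}(N̂_{d₂}(x))(t) = x(t/g)^g where g = gcd(d₁·d₂, t). In particular the composite N̂_{d₁} ∘ N̂_{d₂} depends only on the product d₁·d₂. -/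
variable {k : Type*} [CommRing k]

def ghostNorm (d : ℕ+) (x : ℕ+ → k) : ℕ+ → k :=
  fun t => x (PNat.divExact t (PNat.gcd d t)) ^ ((PNat.gcd d t : ℕ))

def ghostFrobenius (d : ℕ+) (x : ℕ+ → k) : ℕ+ → k :=
  fun t => x (d * t)

def ghostVerschiebung (d : ℕ+) (x : ℕ+ → k) : ℕ+ → k :=
  fun t => if (d : ℕ) ∣ (t : ℕ) then (d : ℕ) • x (PNat.divExact t d) else 0

/- `g * b = gcd(a * b, g * s * b)`, and the extra factor `b` is absorbed since `g * s ∣ g * s * b`. -/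
theorem Nat.gcd_mul_of_gcd_eq {a b g s : ℕ} (hg : Nat.gcd a (g * s) = g) :
    Nat.gcd (a * b) (g * s) = g * Nat.gcd b s := calc
  Nat.gcd (a * b) (g * s) = Nat.gcd (Nat.gcd (a * b) (g * s * b)) (g * s) := by
    rw [Nat.gcd_assoc, Nat.gcd_mul_right_left]
  _ = Nat.gcd (g * b) (g * s) := by rw [Nat.gcd_mul_right, hg]
  _ = g * Nat.gcd b s := Nat.gcd_mul_left g b s

namespace PNat

theorem divExact_eq_of_mul_eq {m n q : ℕ+} (h : n * q = m) : m.divExact n = q :=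
  mul_left_cancel ((mul_div_exact (h ▸ dvd_mul_right n q)).trans h.symm)

theorem divExact_divExact {t a b : ℕ+} (ha : a ∣ t) (hb : b ∣ t.divExact a) :
    (t.divExact a).divExact b = t.divExact (a * b) :=
  (divExact_eq_of_mul_eq <| by rw [mul_assoc, mul_div_exact hb, mul_div_exact ha]).symm

theorem gcd_mul_eq_gcd_mul_gcd_divExact (a b t : ℕ+) :
    gcd (a * b) t = gcd a t * gcd b (t.divExact (gcd a t)) := by
  set g := gcd a t
  set s := t.divExact g
  have hs : g * s = t := mul_div_exact (gcd_dvd_right a t)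
  have hg : Nat.gcd a (g * s) = g := by rw [← mul_coe, hs, ← gcd_coe]
  apply PNat.eq
  rw [mul_coe g, gcd_coe b s, gcd_coe, ← hs, mul_coe a b, mul_coe g s, Nat.gcd_mul_of_gcd_eq hg]

end PNat

/-- The ghost norm is multiplicative in the index: `N̂_{d₁} ∘ N̂_{d₂} = N̂_{d₁·d₂}`,
so the composite depends only on the product `d₁ · d₂`. -/
theorem ghostNorm_ghostNorm (k : Type*) [CommRing k] (d₁ d₂ : ℕ+) (x : ℕ+ → k) :
    ghostNorm d₁ (ghostNorm d₂ x) = ghostNorm (d₁ * d₂) x := by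
  funext t
  simp only [ghostNorm]
  set g₁ := PNat.gcd d₁ t
  set s := t.divExact g₁
  set g₂ := PNat.gcd d₂ s
  have hgcd : PNat.gcd (d₁ * d₂) t = g₁ * g₂ := PNat.gcd_mul_eq_gcd_mul_gcd_divExact d₁ d₂ t
  have hquot : s.divExact g₂ = t.divExact (g₁ * g₂) :=
    PNat.divExact_divExact (PNat.gcd_dvd_right d₁ t) (PNat.gcd_dvd_right d₂ s)
  rw [hgcd, hquot, ← pow_mul, PNat.mul_coe, mul_comm (g₂ : ℕ)]
end
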